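/- Let (m(r), p(r)) be a regular solution of the TOV system for an equation of state with dρ/dp ≥ 0. Then the density never exceeds the average density: for every r in the domain of the solution, 4πr³ρ(p(r)) ≤ 3m(r). -/

import Mathlib

open Real Set Filter Topology

/-- The domain `(0, R)` of radii, where `R ∈ (0,∞]`. -/
def tovDomain (R : ENNReal) : Set ℝ := {r : ℝ | 0 < r ∧ ENNReal.ofReal r < R}

/-- `(m, p)` is a solution of the TOV system on `(0, R)` with `p > 0`, `m > 0` and
`2Gm < c²r`. -/
def IsTOVSolution (G c : ℝ) (ρ m p : ℝ → ℝ) (R : ENNReal) : Prop :=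
  ∀ r ∈ tovDomain R,
    0 < p r ∧ 0 < m r ∧ 2 * G * m r < c ^ 2 * r ∧
    HasDerivAt m (4 * Real.pi * r ^ 2 * ρ (p r)) r ∧
    HasDerivAt p (-(G * m r * ρ (p r) / r ^ 2) * (1 + p r / (ρ (p r) * c ^ 2)) *
      (1 + 4 * Real.pi * r ^ 3 * p r / (m r * c ^ 2)) *
      (1 - 2 * G * m r / (c ^ 2 * r))⁻¹) r

/-- `ρ` is a barotropic equation of state: continuous on `[0,∞)`, C² and positive on
`(0,∞)`, with `dρ/dp ≥ 0`. -/
def IsBarotropic (ρ : ℝ → ℝ) : Prop :=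
  ContinuousOn ρ (Ici 0) ∧ ContDiffOn ℝ 2 ρ (Ioi 0) ∧
  (∀ q ≥ 0, 0 ≤ ρ q) ∧ (∀ q > 0, 0 < ρ q) ∧ (∀ q > 0, 0 ≤ deriv ρ q)

/-- The interval `(0, R)` is maximal: the solution admits no extension to a larger
interval. -/
def IsMaximalTOVSolution (G c : ℝ) (ρ m p : ℝ → ℝ) (R : ENNReal) : Prop :=
  IsTOVSolution G c ρ m p R ∧
  ∀ (R' : ENNReal) (m' p' : ℝ → ℝ), R < R' → IsTOVSolution G c ρ m' p' R' →
    Set.EqOn m' m (tovDomain R) → ¬ Set.EqOn p' p (tovDomain R)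

/-- A regular solution of the TOV system with central pressure `pc > 0`: a maximal
solution with `p(r) → pc` and `m(r)/r³ → (4π/3)ρ(pc)` as `r → 0⁺`. -/
def IsRegularTOVSolution (G c : ℝ) (ρ m p : ℝ → ℝ) (R : ENNReal) (pc : ℝ) : Prop :=
  IsMaximalTOVSolution G c ρ m p R ∧ 0 < pc ∧
  Filter.Tendsto p (nhdsWithin 0 (Ioi 0)) (nhds pc) ∧
  Filter.Tendsto (fun r => m r / r ^ 3) (nhdsWithin 0 (Ioi 0))
    (nhds (4 * Real.pi / 3 * ρ pc))

/-
Along a regular solution the pressure decreases outwards (the right-hand side of the TOV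
equation for `p` is `≤ 0`), so, `ρ` being monotone, the density `ρ(p(s))` decreases in `s`.
The mass of a ball whose density decreases outwards is at least the mass of the uniform
ball with the density at its surface: `m(s) - (4π/3) ρ(p(r)) s³` is nondecreasing on `(0, r]`
and tends to `0` at the centre.
-/

lemma isOpen_tovDomain (R : ENNReal) : IsOpen (tovDomain R) :=
  isOpen_Ioi.inter (isOpen_Iio.preimage ENNReal.continuous_ofReal)

lemma ordConnected_tovDomain (R : ENNReal) : (tovDomain R).OrdConnected :=
  ⟨fun _ hx _ hy _ hz => ⟨hx.1.trans_le hz.1, (ENNReal.ofReal_le_ofReal hz.2).trans_lt hy.2⟩⟩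

lemma Ioc_subset_tovDomain {R : ENNReal} {r : ℝ} (hr : r ∈ tovDomain R) :
    Ioc 0 r ⊆ tovDomain R :=
  fun _ hs => ⟨hs.1, (ENNReal.ofReal_le_ofReal hs.2).trans_lt hr.2⟩

lemma IsBarotropic.monotoneOn {ρ : ℝ → ℝ} (hρ : IsBarotropic ρ) : MonotoneOn ρ (Ioi 0) := by
  have hdiff : DifferentiableOn ℝ ρ (Ioi 0) := hρ.2.1.differentiableOn two_ne_zero
  refine monotoneOn_of_deriv_nonneg (convex_Ioi 0) hdiff.continuousOn ?_ ?_ <;>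
    rw [interior_Ioi]
  exacts [hdiff, hρ.2.2.2.2]

lemma tov_pressure_rhs_nonpos {G c ρ m p r : ℝ} (hG : 0 ≤ G) (hρ : 0 ≤ ρ) (hm : 0 ≤ m)
    (hp : 0 ≤ p) (hr : 0 ≤ r) (hmetric : 2 * G * m ≤ c ^ 2 * r) :
    -(G * m * ρ / r ^ 2) * (1 + p / (ρ * c ^ 2)) * (1 + 4 * π * r ^ 3 * p / (m * c ^ 2)) *
      (1 - 2 * G * m / (c ^ 2 * r))⁻¹ ≤ 0 := by
  have hredshift : 0 ≤ 1 - 2 * G * m / (c ^ 2 * r) :=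
    sub_nonneg.2 (div_le_one_of_le₀ hmetric (by positivity))
  exact mul_nonpos_of_nonpos_of_nonneg (mul_nonpos_of_nonpos_of_nonneg
    (mul_nonpos_of_nonpos_of_nonneg (neg_nonpos.2 (by positivity)) (by positivity))
    (by positivity)) (inv_nonneg.2 hredshift)

lemma IsTOVSolution.antitoneOn_pressure {G c : ℝ} {ρ m p : ℝ → ℝ} {R : ENNReal}
    (hsol : IsTOVSolution G c ρ m p R) (hG : 0 ≤ G) (hρ : ∀ q ≥ 0, 0 ≤ ρ q) :
    AntitoneOn p (tovDomain R) := by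
  have hint : interior (tovDomain R) = tovDomain R := (isOpen_tovDomain R).interior_eq
  refine antitoneOn_of_hasDerivWithinAt_nonpos (ordConnected_tovDomain R).convex
    (fun r hr => (hsol r hr).2.2.2.2.continuousAt.continuousWithinAt)
    (fun r hr => (hsol r (hint ▸ hr)).2.2.2.2.hasDerivWithinAt) fun r hr => ?_
  rw [hint] at hr
  obtain ⟨hp, hm, hmetric, -, -⟩ := hsol r hr
  exact tov_pressure_rhs_nonpos hG (hρ _ hp.le) hm.le hp.le hr.1.le hmetric.le

lemma MonotoneOn.le_of_tendsto_nhdsGT {f : ℝ → ℝ} {a b l : ℝ} (hab : a < b)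
    (hf : MonotoneOn f (Ioc a b)) (hl : Tendsto f (𝓝[>] a) (𝓝 l)) : l ≤ f b := by
  refine le_of_tendsto hl ?_
  filter_upwards [Ioo_mem_nhdsGT hab] with s hs
  exact hf (Ioo_subset_Ioc_self hs) (right_mem_Ioc.2 hab) hs.2.le

lemma tendsto_nhdsGT_zero_of_tendsto_div_pow {f : ℝ → ℝ} {n : ℕ} {L : ℝ} (hn : n ≠ 0)
    (h : Tendsto (fun s => f s / s ^ n) (𝓝[>] 0) (𝓝 L)) : Tendsto f (𝓝[>] 0) (𝓝 0) := by
  have hpow : Tendsto (fun s : ℝ => s ^ n) (𝓝[>] 0) (𝓝 0) :=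
    ((continuous_pow n).tendsto' 0 0 (zero_pow hn)).mono_left nhdsWithin_le_nhds
  refine (zero_mul L ▸ hpow.mul h).congr' ?_
  filter_upwards [self_mem_nhdsWithin] with s hs
  exact mul_div_cancel₀ _ (pow_ne_zero n (ne_of_gt hs))

lemma four_pi_mul_cube_mul_le_of_hasDerivAt {m δ : ℝ → ℝ} {r : ℝ} (hr : 0 < r)
    (hm : ∀ s ∈ Ioc 0 r, HasDerivAt m (4 * π * s ^ 2 * δ s) s) (hδ : AntitoneOn δ (Ioc 0 r))
    (hm0 : Tendsto m (𝓝[>] 0) (𝓝 0)) : 4 * π * r ^ 3 * δ r ≤ 3 * m r := by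
  set g : ℝ → ℝ := fun s => m s - 4 * π / 3 * δ r * s ^ 3
  have hg : ∀ s ∈ Ioc 0 r, HasDerivAt g (4 * π * s ^ 2 * (δ s - δ r)) s := fun s hs =>
    ((hm s hs).sub ((hasDerivAt_pow 3 s).const_mul (4 * π / 3 * δ r))).congr_deriv (by ring)
  have hg_mono : MonotoneOn g (Ioc 0 r) := by
    refine monotoneOn_of_hasDerivWithinAt_nonneg (f' := fun s => 4 * π * s ^ 2 * (δ s - δ r))
      (convex_Ioc 0 r) (fun s hs => (hg s hs).continuousAt.continuousWithinAt) ?_ ?_ <;>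
      rw [interior_Ioc]
    · exact fun s hs => (hg s (Ioo_subset_Ioc_self hs)).hasDerivWithinAt
    · exact fun s hs => mul_nonneg (by positivity) <| sub_nonneg.2 <|
        hδ (Ioo_subset_Ioc_self hs) (right_mem_Ioc.2 hr) hs.2.le
  have hg0 : Tendsto g (𝓝[>] 0) (𝓝 0) := by
    have hcube : Tendsto (fun s : ℝ => s ^ 3) (𝓝[>] 0) (𝓝 0) :=
      ((continuous_pow 3).tendsto' 0 0 (zero_pow three_ne_zero)).mono_left nhdsWithin_le_nhds
    simpa using hm0.sub (hcube.const_mul (4 * π / 3 * δ r))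
  have := hg_mono.le_of_tendsto_nhdsGT hr hg0
  simp only [g] at this
  linarith

theorem stmt8_general
    (G c : ℝ) (hG : 0 < G)
    (ρ : ℝ → ℝ) (hρ : IsBarotropic ρ)
    (m p : ℝ → ℝ) (R : ENNReal) (pc : ℝ)
    (hsol : IsRegularTOVSolution G c ρ m p R pc) :
    ∀ r ∈ tovDomain R, 4 * Real.pi * r ^ 3 * ρ (p r) ≤ 3 * m r := by
  obtain ⟨⟨hTOV, -⟩, -, -, hmlim⟩ := hsol
  have hdensity : AntitoneOn (fun s => ρ (p s)) (tovDomain R) :=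
    hρ.monotoneOn.comp_AntitoneOn (hTOV.antitoneOn_pressure hG.le hρ.2.2.1)
      fun s hs => (hTOV s hs).1
  intro r hr
  exact four_pi_mul_cube_mul_le_of_hasDerivAt hr.1
    (fun s hs => (hTOV s (Ioc_subset_tovDomain hr hs)).2.2.2.1)
    (hdensity.mono (Ioc_subset_tovDomain hr))
    (tendsto_nhdsGT_zero_of_tendsto_div_pow three_ne_zero hmlim)

/-- For a regular solution of the TOV system with `dρ/dp ≥ 0`, the
density never exceeds the average density: `4πr³ρ(p(r)) ≤ 3m(r)` throughout. -/
theorem stmt8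
    (G c : ℝ) (hG : 0 < G) (hc : 0 < c)
    (ρ : ℝ → ℝ) (hρ : IsBarotropic ρ)
    (m p : ℝ → ℝ) (R : ENNReal) (pc : ℝ)
    (hsol : IsRegularTOVSolution G c ρ m p R pc) :
    ∀ r ∈ tovDomain R, 4 * Real.pi * r ^ 3 * ρ (p r) ≤ 3 * m r :=
  stmt8_general G c hG ρ hρ m p R pc hsol
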